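/- arXiv:1611.04531 — 7 statements merged into one kernel-verified Lean document; each statement's English description precedes it below -/
import Mathlib

section
/- Exponential decay for Hurwitz matrices. If a real n×n matrix A is Hurwitz, then there exist constants C > 0 and λ > 0 such that for all t ≥ 0 the operator norm of the matrix exponential satisfies ‖exp(tA)‖ ≤ C·exp(−λt). -/
/-!
Over `ℂ`, every eigenvalue of `exp M` is `exp μ` for an eigenvalue `μ` of `M`: an eigenspace of
`exp M` is `M`-invariant, so it contains an eigenvector of `M`. For a Hurwitz matrix `A` the
spectral radius of `exp A` is therefore `< 1`, and Gelfand's formula gives `‖(exp A) ^ k‖ ≤ C r ^ k`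
with `r < 1`. Writing `t = ⌊t⌋ + s` with `s ∈ [0, 1]` and bounding `exp (s A)` by compactness
gives decay in continuous time; the real operator norm is bounded by the complex one.
-/

open Matrix

open Filter NormedSpace

/-- A real square matrix is Hurwitz if every complex eigenvalue has negative real part. -/
def IsHurwitz {n : Type*} [Fintype n] [DecidableEq n] (M : Matrix n n ℝ) : Prop :=
  ∀ μ ∈ spectrum ℂ (M.map (Complex.ofReal)), μ.re < 0

theorem pow_natFloor_le_inv_mul_rpow {r : ℝ} (hr0 : 0 < r) (hr1 : r ≤ 1) (t : ℝ) :
    r ^ ⌊t⌋₊ ≤ r⁻¹ * r ^ t := by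
  calc r ^ ⌊t⌋₊ = r ^ (⌊t⌋₊ : ℝ) := (Real.rpow_natCast r _).symm
    _ ≤ r ^ (t - 1) := Real.rpow_le_rpow_of_exponent_ge hr0 hr1 (Nat.sub_one_lt_floor t).le
    _ = r⁻¹ * r ^ t := by rw [Real.rpow_sub_one hr0.ne', div_eq_inv_mul]

namespace Module.End

variable {K V : Type*} [Field K] [IsAlgClosed K] [AddCommGroup V] [Module K V]
  [FiniteDimensional K V]

theorem exists_hasEigenvector_of_commute {f g : End K V} (hfg : Commute f g) {ν : K}
    (hν : g.HasEigenvalue ν) : ∃ μ v, f.HasEigenvector μ v ∧ g.HasEigenvector ν v := by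
  have hmaps : Set.MapsTo f (g.eigenspace ν) (g.eigenspace ν) := by
    simpa only [eigenspace_def] using mapsTo_genEigenspace_of_comm hfg.symm ν 1
  have : Nontrivial (g.eigenspace ν) := Submodule.nontrivial_iff_ne_bot.mpr hν
  obtain ⟨μ, hμ⟩ := exists_eigenvalue (f.restrict hmaps)
  obtain ⟨⟨w, hwν⟩, hwμ, hne⟩ := hμ.exists_hasEigenvector
  have hw0 : w ≠ 0 := by simpa using hne
  refine ⟨μ, w, ⟨mem_eigenspace_iff.mpr ?_, hw0⟩, ⟨hwν, hw0⟩⟩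
  exact congrArg Subtype.val (mem_eigenspace_iff.mp hwμ)

end Module.End

section BanachAlgebra

variable {𝔸 : Type*} [NormedRing 𝔸] [NormedAlgebra ℂ 𝔸] [CompleteSpace 𝔸]

theorem exists_norm_pow_le_mul_pow_of_spectralRadius_lt (a : 𝔸) {r : ℝ}
    (h : spectralRadius ℂ a < ENNReal.ofReal r) : ∃ C, ∀ k : ℕ, ‖a ^ k‖ ≤ C * r ^ k := by
  have hr : 0 < r := ENNReal.ofReal_pos.mp (pos_of_gt h)
  have hgelfand := spectrum.pow_norm_pow_one_div_tendsto_nhds_spectralRadius a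
  have hev : ∀ᶠ k : ℕ in atTop, ‖a ^ k‖ / r ^ k ≤ 1 := by
    filter_upwards [hgelfand.eventually_lt_const h, eventually_gt_atTop 0] with k hk hk0
    rw [ENNReal.ofReal_lt_ofReal_iff hr, one_div,
      Real.rpow_inv_lt_iff_of_pos (norm_nonneg _) hr.le (by positivity), Real.rpow_natCast] at hk
    exact (div_le_one (by positivity)).mpr hk.le
  obtain ⟨C, hC⟩ := (isBoundedUnder_of_eventually_le hev).bddAbove_range
  exact ⟨C, fun k => (div_le_iff₀ (by positivity)).mp (hC ⟨k, rfl⟩)⟩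

theorem exists_norm_exp_smul_le_of_mem_Icc (a : 𝔸) :
    ∃ K, ∀ s ∈ Set.Icc (0 : ℝ) 1, ‖exp ((s : ℂ) • a)‖ ≤ K :=
  -- The `NormedSpace.exp` API is stated over `ℚ`; `exp` itself does not depend on this choice.
  let := NormedAlgebra.restrictScalars ℚ ℂ 𝔸
  isCompact_Icc.exists_bound_of_continuousOn
    (exp_continuous.comp (Complex.continuous_ofReal.smul continuous_const)).continuousOn

theorem exp_smul_eq_pow_natFloor_mul (a : 𝔸) (t : ℝ) :
    exp ((t : ℂ) • a) = exp a ^ ⌊t⌋₊ * exp (((t - ⌊t⌋₊ : ℝ) : ℂ) • a) := by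
  let := NormedAlgebra.restrictScalars ℚ ℂ 𝔸
  rw [← NormedSpace.exp_nsmul,
    ← NormedSpace.exp_add_of_commute ((Commute.refl a).smul_left _ |>.smul_right _),
    ← Nat.cast_smul_eq_nsmul ℂ, ← add_smul]
  push_cast
  ring_nf

theorem exists_norm_exp_smul_le_of_spectralRadius_exp_lt_one (a : 𝔸)
    (h : spectralRadius ℂ (exp a) < 1) :
    ∃ C > (0 : ℝ), ∃ lam > (0 : ℝ), ∀ t : ℝ, 0 ≤ t →
      ‖exp ((t : ℂ) • a)‖ ≤ C * Real.exp (-lam * t) := by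
  obtain ⟨r, -, hρr, hr1⟩ := ENNReal.lt_iff_exists_real_btwn.mp h
  have hr0 : 0 < r := ENNReal.ofReal_pos.mp (pos_of_gt hρr)
  have hr1 : r < 1 := by simpa using hr1
  obtain ⟨C, hC⟩ := exists_norm_pow_le_mul_pow_of_spectralRadius_lt (exp a) hρr
  obtain ⟨K, hK⟩ := exists_norm_exp_smul_le_of_mem_Icc a
  have hC0 : 0 ≤ C := by simpa using (norm_nonneg _).trans (hC 0)
  have hK0 : 0 ≤ K := (norm_nonneg _).trans (hK 0 ⟨le_rfl, zero_le_one⟩)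
  refine ⟨(C * K + 1) * r⁻¹, by positivity, -Real.log r, neg_pos.mpr (Real.log_neg hr0 hr1),
    fun t ht => ?_⟩
  have hfrac : t - ⌊t⌋₊ ∈ Set.Icc (0 : ℝ) 1 :=
    ⟨sub_nonneg.mpr (Nat.floor_le ht), by linarith [Nat.lt_floor_add_one t]⟩
  rw [neg_neg, ← Real.rpow_def_of_pos hr0, exp_smul_eq_pow_natFloor_mul]
  calc _ ≤ ‖exp a ^ ⌊t⌋₊‖ * ‖exp (((t - ⌊t⌋₊ : ℝ) : ℂ) • a)‖ := norm_mul_le _ _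
    _ ≤ C * r ^ ⌊t⌋₊ * K := by gcongr; exacts [hC _, hK _ hfrac]
    _ ≤ C * (r⁻¹ * r ^ t) * K := by gcongr; exact pow_natFloor_le_inv_mul_rpow hr0 hr1.le t
    _ ≤ (C * K + 1) * r⁻¹ * r ^ t := by nlinarith [Real.rpow_pos_of_pos hr0 t, inv_pos.mpr hr0]

end BanachAlgebra

theorem EuclideanSpace.norm_toLp_ofReal {ι : Type*} [Fintype ι] (x : ι → ℝ) :
    ‖WithLp.toLp 2 (fun i => (x i : ℂ))‖ = ‖WithLp.toLp 2 x‖ := by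
  simp [EuclideanSpace.norm_eq]

namespace Matrix

variable {ι : Type*} [Fintype ι] [DecidableEq ι]
open scoped Matrix.Norms.L2Operator

theorem exp_mulVec_of_mulVec_eq_smul {𝕂 : Type*} [RCLike 𝕂]
    {M : Matrix ι ι 𝕂} {μ : 𝕂} {w : ι → 𝕂} (h : M *ᵥ w = μ • w) :
    exp M *ᵥ w = exp μ • w := by
  have hpow (k : ℕ) : M ^ k *ᵥ w = μ ^ k • w := by
    induction k with
    | zero => simp
    | succ k ih => rw [pow_succ', ← mulVec_mulVec, ih, mulVec_smul, h, smul_smul, pow_succ]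
  have hseries := (exp_series_hasSum_exp' (𝕂 := 𝕂) M).map
    (mulVec.addMonoidHomLeft w) (continuous_id.matrix_mulVec continuous_const)
  refine hseries.unique ?_
  convert (exp_series_hasSum_exp' (𝕂 := 𝕂) μ).smul_const w using 1
  ext k : 1
  change ((k.factorial : 𝕂)⁻¹ • M ^ k) *ᵥ w = _
  rw [smul_mulVec, hpow, smul_smul, smul_eq_mul]

theorem spectrum_exp_subset (M : Matrix ι ι ℂ) :
    spectrum ℂ (exp M) ⊆ Complex.exp '' spectrum ℂ M := by
  intro ν hν
  rw [← spectrum_toLin', ← Module.End.hasEigenvalue_iff_mem_spectrum] at hν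
  have hcomm : Commute (toLin' M) (toLin' (exp M)) :=
    ((Commute.refl M).exp_right).map toLinAlgEquiv'
  obtain ⟨μ, w, hμ, hν⟩ := Module.End.exists_hasEigenvector_of_commute hcomm hν
  refine ⟨μ, spectrum_toLin' M ▸ (Module.End.hasEigenvalue_of_hasEigenvector hμ).mem_spectrum, ?_⟩
  have hexp : exp M *ᵥ w = Complex.exp μ • w := by
    rw [Complex.exp_eq_exp_ℂ]
    exact exp_mulVec_of_mulVec_eq_smul (by simpa using hμ.apply_eq_smul)
  have hexp' : exp M *ᵥ w = ν • w := by simpa using hν.apply_eq_smul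
  exact smul_left_injective ℂ hμ.2 (hexp.symm.trans hexp')

theorem l2_opNorm_le_l2_opNorm_map_ofReal (M : Matrix ι ι ℝ) :
    ‖M‖ ≤ ‖M.map ((↑) : ℝ → ℂ)‖ := by
  refine ContinuousLinearMap.opNorm_le_bound _ (norm_nonneg _) fun x => ?_
  calc ‖toEuclideanCLM (𝕜 := ℝ) M x‖
      = ‖toEuclideanCLM (𝕜 := ℂ) (M.map (↑)) (WithLp.toLp 2 fun i => (x i : ℂ))‖ := by
        rw [toEuclideanCLM_toLp, toEuclideanCLM_toLp, ← EuclideanSpace.norm_toLp_ofReal]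
        congr 2
        ext i
        exact Complex.ofRealHom.map_mulVec M x.ofLp i
    _ ≤ ‖M.map ((↑) : ℝ → ℂ)‖ * ‖WithLp.toLp 2 fun i => (x i : ℂ)‖ :=
        ContinuousLinearMap.le_opNorm _ _
    _ = ‖M.map ((↑) : ℝ → ℂ)‖ * ‖x‖ := by rw [EuclideanSpace.norm_toLp_ofReal]

theorem map_ofReal_exp (M : Matrix ι ι ℝ) :
    (exp M).map ((↑) : ℝ → ℂ) = exp (M.map (↑)) :=
  let := NormedAlgebra.restrictScalars ℚ ℝ (Matrix ι ι ℝ)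
  map_exp Complex.ofRealHom.mapMatrix (continuous_id.matrix_map Complex.continuous_ofReal) M

theorem spectralRadius_exp_lt_one {M : Matrix ι ι ℂ} (hM : ∀ μ ∈ spectrum ℂ M, μ.re < 0) :
    spectralRadius ℂ (exp M) < 1 := by
  rcases (spectrum ℂ (exp M)).eq_empty_or_nonempty with hempty | hne
  · simp [spectralRadius, hempty]
  · refine spectrum.spectralRadius_lt_of_forall_lt_of_nonempty hne fun z hz => ?_
    obtain ⟨μ, hμ, rfl⟩ := spectrum_exp_subset M hz
    rw [← NNReal.coe_lt_coe, coe_nnnorm, Complex.norm_exp, NNReal.coe_one, Real.exp_lt_one_iff]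
    exact hM μ hμ

end Matrix

/-- **Exponential decay for Hurwitz matrices.** If `A` is Hurwitz then the (Euclidean)
operator norm of `exp(tA)` decays exponentially: there are `C > 0` and `λ > 0` with
`‖exp(tA)‖ ≤ C·exp(−λt)` for all `t ≥ 0`. -/
theorem hurwitz_exp_decay {n : ℕ} (A : Matrix (Fin n) (Fin n) ℝ) (hA : IsHurwitz A) :
    ∃ C > (0 : ℝ), ∃ lam > (0 : ℝ), ∀ t : ℝ, 0 ≤ t →
      ‖Matrix.toEuclideanCLM (𝕜 := ℝ) (NormedSpace.exp (t • A))‖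
        ≤ C * Real.exp (-lam * t) := by
  open scoped Matrix.Norms.L2Operator in
  obtain ⟨C, hC, lam, hlam, hdecay⟩ :=
    exists_norm_exp_smul_le_of_spectralRadius_exp_lt_one _
      (spectralRadius_exp_lt_one (M := A.map Complex.ofReal) hA)
  refine ⟨C, hC, lam, hlam, fun t ht => ?_⟩
  have hmap : (t • A).map ((↑) : ℝ → ℂ) = (t : ℂ) • A.map (↑) := by
    ext i j
    simp
  calc ‖toEuclideanCLM (𝕜 := ℝ) (exp (t • A))‖
      ≤ ‖(exp (t • A)).map ((↑) : ℝ → ℂ)‖ := l2_opNorm_le_l2_opNorm_map_ofReal _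
    _ = ‖exp ((t : ℂ) • A.map ((↑) : ℝ → ℂ))‖ := by rw [map_ofReal_exp, hmap]
    _ ≤ C * Real.exp (-lam * t) := hdecay t ht
end

section
/- Stability part of Theorem 1. Suppose the block matrix A = [[A₁, L₁Γ₂],[L₂Γ₁, A₂]] is Hurwitz, and let K₁ be any real m₁×p₁ matrix such that A₁ + B₁K₁C₁ is Hurwitz. Then the (2n₁+n₂)×(2n₁+n₂) closed-loop matrix of the preexisting system with the retrofit controller Π₁ (consisting of the localizing compensator x̂₁' = A₁x̂₁ + L₁Γ₂x₂ and the feedback u₁ = K₁(C₁x₁ − C₁x̂₁)), namely the block matrix (with state ordering (x₁, x₂, x̂₁)) M_cl = [[A₁+B₁K₁C₁, L₁Γ₂, −B₁K₁C₁],[L₂Γ₁, A₂, 0],[0, L₁Γ₂, A₁]], is Hurwitz. -/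
/-!
In the coordinates `(x₁ - x̂₁, x₂, x̂₁)` the estimation error `x₁ - x̂₁` evolves autonomously by
`A₁ + B₁K₁C₁`, while `(x₂, x̂₁)` reproduces the preexisting system driven by that error. The
closed-loop matrix is therefore similar to a block-triangular matrix whose diagonal blocks are
`A₁ + B₁K₁C₁` and (up to a permutation of the blocks) `A`, so its characteristic polynomial is the
product of theirs.
-/

open Matrix

namespace Matrix

variable {R : Type*} [CommRing R] {n m : Type*} [Fintype n] [DecidableEq n]
  [Fintype m] [DecidableEq m]

theorem charpoly_mul_mul_of_mul_eq_one {P Q : Matrix n n R} (hPQ : P * Q = 1)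
    (M : Matrix n n R) : (Q * M * P).charpoly = M.charpoly := by
  rw [mul_assoc, charpoly_mul_comm, mul_assoc, hPQ, mul_one]

theorem charpoly_fromBlocks_swap (A : Matrix n n R) (B : Matrix n m R) (C : Matrix m n R)
    (D : Matrix m m R) : (fromBlocks D C B A).charpoly = (fromBlocks A B C D).charpoly := by
  rw [← fromBlocks_submatrix_sum_swap_sum_swap, ← charpoly_reindex (Equiv.sumComm n m)]
  rfl

end Matrix

section RetrofitClosedLoop

variable {R : Type*} [CommRing R] {n m : Type*} [Fintype n] [DecidableEq n]
  [Fintype m] [DecidableEq m]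
  (A E : Matrix n n R) (U : Matrix n m R) (V : Matrix m n R) (D : Matrix m m R)

theorem retrofitClosedLoop_eq_conj_blockTriangular :
    fromBlocks (A + E) (fromCols U (-E)) (fromRows V 0) (fromBlocks D 0 U A) =
      fromBlocks 1 (fromCols 0 1) 0 1 *
        fromBlocks (A + E) 0 (fromRows V 0) (fromBlocks D V U A) *
          fromBlocks 1 (fromCols 0 (-1)) 0 1 := by
  simp only [fromBlocks_multiply, fromCols_mul_fromRows, mul_fromCols, fromCols_mul_fromBlocks,
    Matrix.one_mul, Matrix.mul_one, Matrix.zero_mul, Matrix.mul_zero, Matrix.mul_neg]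
  ext (i | i | i) (j | j | j) <;> simp

theorem charpoly_retrofitClosedLoop :
    (fromBlocks (A + E) (fromCols U (-E)) (fromRows V 0) (fromBlocks D 0 U A)).charpoly =
      (A + E).charpoly * (fromBlocks A U V D).charpoly := by
  have hPQ : (fromBlocks 1 (fromCols 0 (-1)) 0 1 : Matrix (n ⊕ (m ⊕ n)) (n ⊕ (m ⊕ n)) R) *
      fromBlocks 1 (fromCols 0 1) 0 1 = 1 := by
    ext (i | i | i) (j | j | j) <;> simp [fromBlocks_multiply, one_apply]
  rw [retrofitClosedLoop_eq_conj_blockTriangular, charpoly_mul_mul_of_mul_eq_one hPQ,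
    charpoly_fromBlocks_zero₁₂, charpoly_fromBlocks_swap]

end RetrofitClosedLoop

theorem mem_spectrum_map_ofReal_iff {n : Type*} [Fintype n] [DecidableEq n] (M : Matrix n n ℝ)
    (μ : ℂ) :
    μ ∈ spectrum ℂ (M.map Complex.ofReal) ↔ (M.charpoly.map Complex.ofRealHom).IsRoot μ := by
  rw [mem_spectrum_iff_isRoot_charpoly, ← charpoly_map]
  rfl

theorem IsHurwitz.of_charpoly_eq_mul {n ι κ : Type*} [Fintype n] [DecidableEq n] [Fintype ι]
    [DecidableEq ι] [Fintype κ] [DecidableEq κ] {M : Matrix n n ℝ} {N₁ : Matrix ι ι ℝ}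
    {N₂ : Matrix κ κ ℝ} (h : M.charpoly = N₁.charpoly * N₂.charpoly) (h₁ : IsHurwitz N₁)
    (h₂ : IsHurwitz N₂) : IsHurwitz M := by
  intro μ hμ
  rw [mem_spectrum_map_ofReal_iff, h, Polynomial.map_mul, Polynomial.root_mul] at hμ
  rcases hμ with hμ | hμ
  · exact h₁ μ ((mem_spectrum_map_ofReal_iff N₁ μ).2 hμ)
  · exact h₂ μ ((mem_spectrum_map_ofReal_iff N₂ μ).2 hμ)

/-- **Stability part of Theorem 1.** If the preexisting system matrix `A` is Hurwitz and
`A₁ + B₁K₁C₁` is Hurwitz, then the closed-loop matrix of the preexisting system with the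
retrofit controller `Π₁` (state ordering `(x₁, x₂, x̂₁)`) is Hurwitz. -/
theorem retrofit_closed_loop_stability
    {n₁ n₂ m₁ m₂ q p₁ : ℕ}
    (A₁ : Matrix (Fin n₁) (Fin n₁) ℝ) (L₁ : Matrix (Fin n₁) (Fin m₂) ℝ)
    (B₁ : Matrix (Fin n₁) (Fin m₁) ℝ) (C₁ : Matrix (Fin p₁) (Fin n₁) ℝ)
    (A₂ : Matrix (Fin n₂) (Fin n₂) ℝ) (L₂ : Matrix (Fin n₂) (Fin q) ℝ)
    (Γ₁ : Matrix (Fin q) (Fin n₁) ℝ) (Γ₂ : Matrix (Fin m₂) (Fin n₂) ℝ)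
    (K₁ : Matrix (Fin m₁) (Fin p₁) ℝ)
    (hA : IsHurwitz (fromBlocks A₁ (L₁ * Γ₂) (L₂ * Γ₁) A₂))
    (hK : IsHurwitz (A₁ + B₁ * K₁ * C₁)) :
    IsHurwitz
      (fromBlocks (A₁ + B₁ * K₁ * C₁) (fromCols (L₁ * Γ₂) (-(B₁ * K₁ * C₁)))
        (fromRows (L₂ * Γ₁) (0 : Matrix (Fin n₁) (Fin n₁) ℝ))
        (fromBlocks A₂ (0 : Matrix (Fin n₂) (Fin n₁) ℝ) (L₁ * Γ₂) A₁)) :=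
  IsHurwitz.of_charpoly_eq_mul (charpoly_retrofitClosedLoop _ _ _ _ _) hK hA
end

section
/- Parameterized hierarchical state-space expansion (Lemma 3). Let P₁ be a real n₁×n̂₁ matrix and P₁† a real n̂₁×n₁ matrix with P₁†P₁ = I, and let P̄₁ (n₁×(n₁−n̂₁)) and P̄₁† ((n₁−n̂₁)×n₁) satisfy P₁P₁† + P̄₁P̄₁† = I. Assume the column space of B₁ is contained in the column space of P₁. Let u₁ : ℝ → ℝ^{m₁} be continuous, let ξ̂₁ : ℝ → ℝ^{n̂₁} be differentiable with ξ̂₁'(t) = P₁†A₁P₁ξ̂₁(t) + P₁†B₁u₁(t), and let ξ₁ : ℝ → ℝ^{n₁}, ξ₂ : ℝ → ℝ^{n₂} be differentiable with ξ₁'(t) = A₁ξ₁(t) + L₁Γ₂ξ₂(t) + P̄₁P̄₁†A₁P₁ξ̂₁(t) and ξ₂'(t) = L₂Γ₁(ξ₁(t) + P₁ξ̂₁(t)) + A₂ξ₂(t) for all t. Then x₁ := ξ₁ + P₁ξ̂₁ and x₂ := ξ₂ satisfy x₁'(t) = A₁x₁(t) + L₁Γ₂x₂(t) + B₁u₁(t)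 and x₂'(t) = L₂Γ₁x₁(t) + A₂x₂(t) for all t. -/
/-!
Differentiating `ξ₁ + P₁ ξ̂₁` gives `A₁ ξ₁ + L₁ Γ₂ ξ₂ + (P₁ P₁† + P̄₁ P̄₁†) A₁ P₁ ξ̂₁ + P₁ P₁† B₁ u₁`.
The complementary projectors sum to the identity, and `P₁ P₁†` fixes `B₁` because the columns
of `B₁` lie in the column space of `P₁`, on which `P₁ P₁†` acts as the identity.
-/

open Matrix

namespace Matrix

variable {R : Type*} [CommSemiring R] {m n k : Type*} [Fintype m] [Fintype n] [Fintype k]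
  [DecidableEq n]

theorem mul_mul_eq_of_range_mulVecLin_le {P : Matrix m n R} {P' : Matrix n m R}
    {B : Matrix m k R} (hleft : P' * P = 1)
    (hB : LinearMap.range B.mulVecLin ≤ LinearMap.range P.mulVecLin) :
    P * (P' * B) = B := by
  refine mulVec_injective (funext fun v => ?_)
  obtain ⟨w, hw⟩ := hB ⟨v, rfl⟩
  simp only [mulVecLin_apply] at hw
  rw [← mulVec_mulVec, ← mulVec_mulVec, ← hw, mulVec_mulVec (M := P'), hleft, one_mulVec]

end Matrix

theorem HasDerivAt.matrix_mulVec {𝕜 : Type*} [NontriviallyNormedField 𝕜] [CompleteSpace 𝕜]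
    {m n : Type*} [Fintype m] [Fintype n] (M : Matrix m n 𝕜) {f : 𝕜 → n → 𝕜} {f' : n → 𝕜} {x : 𝕜}
    (hf : HasDerivAt f f' x) : HasDerivAt (fun s => M *ᵥ f s) (M *ᵥ f') x :=
  M.mulVecLin.toContinuousLinearMap.hasFDerivAt.comp_hasDerivAt x hf

theorem parameterized_hierarchical_expansion_general
    {n₁ n₂ nh₁ m₁ m₂ q : ℕ}
    (A₁ : Matrix (Fin n₁) (Fin n₁) ℝ) (L₁ : Matrix (Fin n₁) (Fin m₂) ℝ)
    (B₁ : Matrix (Fin n₁) (Fin m₁) ℝ) (A₂ : Matrix (Fin n₂) (Fin n₂) ℝ)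
    (L₂ : Matrix (Fin n₂) (Fin q) ℝ) (Γ₁ : Matrix (Fin q) (Fin n₁) ℝ)
    (Γ₂ : Matrix (Fin m₂) (Fin n₂) ℝ)
    (P₁ : Matrix (Fin n₁) (Fin nh₁) ℝ) (P₁d : Matrix (Fin nh₁) (Fin n₁) ℝ)
    (Pb₁ : Matrix (Fin n₁) (Fin (n₁ - nh₁)) ℝ) (Pb₁d : Matrix (Fin (n₁ - nh₁)) (Fin n₁) ℝ)
    (hleft : P₁d * P₁ = 1)
    (hproj : P₁ * P₁d + Pb₁ * Pb₁d = 1)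
    (hB : LinearMap.range B₁.mulVecLin ≤ LinearMap.range P₁.mulVecLin)
    (u₁ : ℝ → Fin m₁ → ℝ)
    (ξh₁ : ℝ → Fin nh₁ → ℝ) (ξ₁ : ℝ → Fin n₁ → ℝ) (ξ₂ : ℝ → Fin n₂ → ℝ)
    (hup : ∀ t : ℝ, HasDerivAt ξh₁
      ((P₁d * A₁ * P₁).mulVec (ξh₁ t) + (P₁d * B₁).mulVec (u₁ t)) t)
    (hdn₁ : ∀ t : ℝ, HasDerivAt ξ₁
      (A₁.mulVec (ξ₁ t) + (L₁ * Γ₂).mulVec (ξ₂ t)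
        + (Pb₁ * Pb₁d * A₁ * P₁).mulVec (ξh₁ t)) t)
    (hdn₂ : ∀ t : ℝ, HasDerivAt ξ₂
      ((L₂ * Γ₁).mulVec (ξ₁ t + P₁.mulVec (ξh₁ t)) + A₂.mulVec (ξ₂ t)) t) :
    (∀ t : ℝ, HasDerivAt (fun s => ξ₁ s + P₁.mulVec (ξh₁ s))
      (A₁.mulVec (ξ₁ t + P₁.mulVec (ξh₁ t)) + (L₁ * Γ₂).mulVec (ξ₂ t)
        + B₁.mulVec (u₁ t)) t) ∧
    (∀ t : ℝ, HasDerivAt ξ₂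
      ((L₂ * Γ₁).mulVec (ξ₁ t + P₁.mulVec (ξh₁ t)) + A₂.mulVec (ξ₂ t)) t) := by
  have hPB : P₁ * (P₁d * B₁) = B₁ := mul_mul_eq_of_range_mulVecLin_le hleft hB
  have hPA : P₁ * (P₁d * A₁ * P₁) + Pb₁ * Pb₁d * A₁ * P₁ = A₁ * P₁ := by
    simp only [← Matrix.mul_assoc, ← Matrix.add_mul, hproj, Matrix.one_mul]
  refine ⟨fun t => ((hdn₁ t).add ((hup t).matrix_mulVec P₁)).congr_deriv ?_, hdn₂⟩
  rw [mulVec_add, mulVec_mulVec, mulVec_mulVec, hPB, mulVec_add A₁, mulVec_mulVec (M := A₁), ← hPA,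
    add_mulVec]
  abel

/-- **Parameterized hierarchical state-space expansion (Lemma 3).** -/
theorem parameterized_hierarchical_expansion
    {n₁ n₂ nh₁ m₁ m₂ q : ℕ}
    (A₁ : Matrix (Fin n₁) (Fin n₁) ℝ) (L₁ : Matrix (Fin n₁) (Fin m₂) ℝ)
    (B₁ : Matrix (Fin n₁) (Fin m₁) ℝ) (A₂ : Matrix (Fin n₂) (Fin n₂) ℝ)
    (L₂ : Matrix (Fin n₂) (Fin q) ℝ) (Γ₁ : Matrix (Fin q) (Fin n₁) ℝ)
    (Γ₂ : Matrix (Fin m₂) (Fin n₂) ℝ)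
    (P₁ : Matrix (Fin n₁) (Fin nh₁) ℝ) (P₁d : Matrix (Fin nh₁) (Fin n₁) ℝ)
    (Pb₁ : Matrix (Fin n₁) (Fin (n₁ - nh₁)) ℝ) (Pb₁d : Matrix (Fin (n₁ - nh₁)) (Fin n₁) ℝ)
    (hleft : P₁d * P₁ = 1)
    (hproj : P₁ * P₁d + Pb₁ * Pb₁d = 1)
    (hB : LinearMap.range B₁.mulVecLin ≤ LinearMap.range P₁.mulVecLin)
    (u₁ : ℝ → Fin m₁ → ℝ) (hu : Continuous u₁)
    (ξh₁ : ℝ → Fin nh₁ → ℝ) (ξ₁ : ℝ → Fin n₁ → ℝ) (ξ₂ : ℝ → Fin n₂ → ℝ)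
    (hup : ∀ t : ℝ, HasDerivAt ξh₁
      ((P₁d * A₁ * P₁).mulVec (ξh₁ t) + (P₁d * B₁).mulVec (u₁ t)) t)
    (hdn₁ : ∀ t : ℝ, HasDerivAt ξ₁
      (A₁.mulVec (ξ₁ t) + (L₁ * Γ₂).mulVec (ξ₂ t)
        + (Pb₁ * Pb₁d * A₁ * P₁).mulVec (ξh₁ t)) t)
    (hdn₂ : ∀ t : ℝ, HasDerivAt ξ₂
      ((L₂ * Γ₁).mulVec (ξ₁ t + P₁.mulVec (ξh₁ t)) + A₂.mulVec (ξ₂ t)) t) :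
    (∀ t : ℝ, HasDerivAt (fun s => ξ₁ s + P₁.mulVec (ξh₁ s))
      (A₁.mulVec (ξ₁ t + P₁.mulVec (ξh₁ t)) + (L₁ * Γ₂).mulVec (ξ₂ t)
        + B₁.mulVec (u₁ t)) t) ∧
    (∀ t : ℝ, HasDerivAt ξ₂
      ((L₂ * Γ₁).mulVec (ξ₁ t + P₁.mulVec (ξh₁ t)) + A₂.mulVec (ξ₂ t)) t) :=
  parameterized_hierarchical_expansion_general A₁ L₁ B₁ A₂ L₂ Γ₁ Γ₂ P₁ P₁d Pb₁ Pb₁d hleft hproj hB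
    u₁ ξh₁ ξ₁ ξ₂ hup hdn₁ hdn₂
end

section
/- Stability part of Lemma 4. Let P₁ (n₁×n̂₁), P₁† (n̂₁×n₁), P̄₁ (n₁×(n₁−n̂₁)), P̄₁† ((n₁−n̂₁)×n₁) be real matrices with P₁†P₁ = I and P₁P₁† + P̄₁P̄₁† = I, and let K̂₁ be a real m₁×n̂₁ matrix. Suppose the block matrix A = [[A₁, L₁Γ₂],[L₂Γ₁, A₂]] is Hurwitz. Then the closed-loop matrix of the parameterized hierarchical realization under the local state feedback u₁ = K̂₁ξ̂₁, namely the block matrix (with state ordering (ξ̂₁, ξ₁, ξ₂)) M = [[P₁†A₁P₁ + P₁†B₁K̂₁, 0, 0],[P̄₁P̄₁†A₁P₁, A₁, L₁Γ₂],[L₂Γ₁P₁, L₂Γ₁, A₂]], is Hurwitz if and only if P₁†A₁P₁ + P₁†B₁K̂₁ is Hurwitz. -/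
open Matrix

theorem Matrix.spectrum_fromBlocks_zero₁₂ {K m n : Type*} [Field K] [Fintype m] [Fintype n]
    [DecidableEq m] [DecidableEq n] (A : Matrix m m K) (C : Matrix n m K) (D : Matrix n n K) :
    spectrum K (fromBlocks A 0 C D) = spectrum K A ∪ spectrum K D := by
  ext μ
  simp only [Set.mem_union, mem_spectrum_iff_isRoot_charpoly, charpoly_fromBlocks_zero₁₂,
    Polynomial.IsRoot.def, Polynomial.eval_mul, mul_eq_zero]

theorem isHurwitz_fromBlocks_zero₁₂_iff {m n : Type*} [Fintype m] [Fintype n]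
    [DecidableEq m] [DecidableEq n] (A : Matrix m m ℝ) (C : Matrix n m ℝ) (D : Matrix n n ℝ) :
    IsHurwitz (fromBlocks A 0 C D) ↔ IsHurwitz A ∧ IsHurwitz D := by
  simp only [IsHurwitz, fromBlocks_map, Matrix.map_zero _ Complex.ofReal_zero,
    spectrum_fromBlocks_zero₁₂, Set.mem_union, or_imp, forall_and]

theorem parameterized_hierarchical_stability_general
    {n₁ n₂ nh₁ m₁ m₂ q : ℕ}
    (A₁ : Matrix (Fin n₁) (Fin n₁) ℝ) (L₁ : Matrix (Fin n₁) (Fin m₂) ℝ)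
    (B₁ : Matrix (Fin n₁) (Fin m₁) ℝ) (A₂ : Matrix (Fin n₂) (Fin n₂) ℝ)
    (L₂ : Matrix (Fin n₂) (Fin q) ℝ) (Γ₁ : Matrix (Fin q) (Fin n₁) ℝ)
    (Γ₂ : Matrix (Fin m₂) (Fin n₂) ℝ)
    (P₁ : Matrix (Fin n₁) (Fin nh₁) ℝ) (P₁d : Matrix (Fin nh₁) (Fin n₁) ℝ)
    (Pb₁ : Matrix (Fin n₁) (Fin (n₁ - nh₁)) ℝ) (Pb₁d : Matrix (Fin (n₁ - nh₁)) (Fin n₁) ℝ)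
    (Kh₁ : Matrix (Fin m₁) (Fin nh₁) ℝ)
    (hA : IsHurwitz (fromBlocks A₁ (L₁ * Γ₂) (L₂ * Γ₁) A₂)) :
    IsHurwitz
      (fromBlocks (P₁d * A₁ * P₁ + P₁d * B₁ * Kh₁)
        (0 : Matrix (Fin nh₁) (Fin n₁ ⊕ Fin n₂) ℝ)
        (fromRows (Pb₁ * Pb₁d * A₁ * P₁) (L₂ * Γ₁ * P₁))
        (fromBlocks A₁ (L₁ * Γ₂) (L₂ * Γ₁) A₂))
    ↔ IsHurwitz (P₁d * A₁ * P₁ + P₁d * B₁ * Kh₁) := by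
  rw [isHurwitz_fromBlocks_zero₁₂_iff, and_iff_left hA]

/-- **Stability part of Lemma 4.** The closed-loop matrix of the parameterized hierarchical
realization under the local state feedback `u₁ = K̂₁ ξ̂₁` (state ordering `(ξ̂₁, ξ₁, ξ₂)`)
is Hurwitz iff `P₁†A₁P₁ + P₁†B₁K̂₁` is Hurwitz, provided `A` is Hurwitz. -/
theorem parameterized_hierarchical_stability
    {n₁ n₂ nh₁ m₁ m₂ q : ℕ}
    (A₁ : Matrix (Fin n₁) (Fin n₁) ℝ) (L₁ : Matrix (Fin n₁) (Fin m₂) ℝ)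
    (B₁ : Matrix (Fin n₁) (Fin m₁) ℝ) (A₂ : Matrix (Fin n₂) (Fin n₂) ℝ)
    (L₂ : Matrix (Fin n₂) (Fin q) ℝ) (Γ₁ : Matrix (Fin q) (Fin n₁) ℝ)
    (Γ₂ : Matrix (Fin m₂) (Fin n₂) ℝ)
    (P₁ : Matrix (Fin n₁) (Fin nh₁) ℝ) (P₁d : Matrix (Fin nh₁) (Fin n₁) ℝ)
    (Pb₁ : Matrix (Fin n₁) (Fin (n₁ - nh₁)) ℝ) (Pb₁d : Matrix (Fin (n₁ - nh₁)) (Fin n₁) ℝ)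
    (Kh₁ : Matrix (Fin m₁) (Fin nh₁) ℝ)
    (hleft : P₁d * P₁ = 1)
    (hproj : P₁ * P₁d + Pb₁ * Pb₁d = 1)
    (hA : IsHurwitz (fromBlocks A₁ (L₁ * Γ₂) (L₂ * Γ₁) A₂)) :
    IsHurwitz
      (fromBlocks (P₁d * A₁ * P₁ + P₁d * B₁ * Kh₁)
        (0 : Matrix (Fin nh₁) (Fin n₁ ⊕ Fin n₂) ℝ)
        (fromRows (Pb₁ * Pb₁d * A₁ * P₁) (L₂ * Γ₁ * P₁))
        (fromBlocks A₁ (L₁ * Γ₂) (L₂ * Γ₁) A₂))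
    ↔ IsHurwitz (P₁d * A₁ * P₁ + P₁d * B₁ * Kh₁) :=
  parameterized_hierarchical_stability_general A₁ L₁ B₁ A₂ L₂ Γ₁ Γ₂ P₁ P₁d Pb₁ Pb₁d Kh₁ hA
end

section
/- Stability part of Theorem 2. Let P₁ (n₁×n̂₁), P₁† (n̂₁×n₁), P̄₁ (n₁×(n₁−n̂₁)), P̄₁† ((n₁−n̂₁)×n₁) be real matrices with P₁†P₁ = I, P₁P₁† + P̄₁P̄₁† = I, P₁P₁†B₁ = B₁, and P₁†L₁ = 0. Suppose the block matrix A = [[A₁, L₁Γ₂],[L₂Γ₁, A₂]] is Hurwitz, and let K̂₁ be any real m₁×n̂₁ matrix such that P₁†A₁P₁ + P₁†B₁K̂₁ is Hurwitz. Then the (n₁+n₂+n̂₁)×(n₁+n₂+n̂₁) closed-loop matrix of the preexisting system with the retrofit controller Π₁' (consisting of the localizing compensator x̂₁' = P₁†A₁P₁x̂₁ + P₁†A₁P̄₁P̄₁†x₁ and the feedback u₁ = K̂₁(P₁†x₁ − x̂₁)), namely the block matrix (with state ordering (x₁, x₂, x̂₁)) M_cl' = [[A₁ + B₁K̂₁P₁†,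 L₁Γ₂, −B₁K̂₁],[L₂Γ₁, A₂, 0],[P₁†A₁P̄₁P̄₁†, 0, P₁†A₁P₁]], is Hurwitz. -/
open Matrix

/-! The estimation error `ξ = P₁† x₁ - x̂₁` evolves autonomously: because
`P̄₁ P̄₁† = 1 - P₁ P₁†` and `P₁† L₁ = 0`, one gets `ξ' = (P₁† A₁ P₁ + P₁† B₁ K̂₁) ξ`, while
`(x₁, x₂)` follows the original interconnection `A` driven by `B₁ K̂₁ ξ`. So in the coordinates
`(x₁, x₂, ξ)`, obtained from `(x₁, x₂, x̂₁)` by an involution, the closed loop is block upper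
triangular with diagonal blocks `A` and `P₁† A₁ P₁ + P₁† B₁ K̂₁`. -/

namespace IsHurwitz

variable {n m : Type*} [Fintype n] [DecidableEq n] [Fintype m] [DecidableEq m]

theorem conj {M T S : Matrix n n ℝ} (hST : S * T = 1) (hM : IsHurwitz M) :
    IsHurwitz (T * M * S) := by
  let f := (Complex.ofRealHom : ℝ →+* ℂ).mapMatrix (m := n)
  have hTS : T * S = 1 := mul_eq_one_comm.mp hST
  let u : (Matrix n n ℂ)ˣ :=
    ⟨f T, f S, by rw [← map_mul, hTS, map_one], by rw [← map_mul, hST, map_one]⟩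
  intro μ hμ
  have hmap : (T * M * S).map Complex.ofReal =
      u * f M * ((u⁻¹ : (Matrix n n ℂ)ˣ) : Matrix n n ℂ) := by
    change f (T * M * S) = _
    rw [map_mul, map_mul]
    rfl
  rw [hmap, spectrum.units_conjugate] at hμ
  exact hM μ hμ

theorem conj_iff {M T S : Matrix n n ℝ} (hST : S * T = 1) :
    IsHurwitz (T * M * S) ↔ IsHurwitz M := by
  refine ⟨fun h => ?_, conj hST⟩
  have hTS : T * S = 1 := mul_eq_one_comm.mp hST
  have hM : S * (T * M * S) * T = M := by
    rw [show S * (T * M * S) * T = S * T * M * (S * T) by simp only [Matrix.mul_assoc], hST,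
      Matrix.one_mul, Matrix.mul_one]
  simpa only [hM] using h.conj hTS

theorem reindex (e : n ≃ m) {M : Matrix n n ℝ} (hM : IsHurwitz M) :
    IsHurwitz (Matrix.reindex e e M) := by
  intro μ hμ
  have hmap : (Matrix.reindex e e M).map Complex.ofReal =
      reindexAlgEquiv ℂ ℂ e (M.map Complex.ofReal) := rfl
  rw [hmap, AlgEquiv.spectrum_eq] at hμ
  exact hM μ hμ

theorem fromBlocks_zero₂₁ {A : Matrix n n ℝ} {D : Matrix m m ℝ} (B : Matrix n m ℝ)
    (hA : IsHurwitz A) (hD : IsHurwitz D) : IsHurwitz (fromBlocks A B 0 D) := by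
  intro μ hμ
  rw [fromBlocks_map, Matrix.map_zero _ Complex.ofReal_zero, mem_spectrum_iff_isRoot_charpoly,
    charpoly_fromBlocks_zero₂₁, Polynomial.root_mul] at hμ
  rcases hμ with hμ | hμ
  · exact hA μ (mem_spectrum_iff_isRoot_charpoly.mpr hμ)
  · exact hD μ (mem_spectrum_iff_isRoot_charpoly.mpr hμ)

theorem fromBlocks_fromBlocks_zero {l : Type*} [Fintype l] [DecidableEq l]
    {A : Matrix n n ℝ} {B : Matrix n m ℝ} {C : Matrix m n ℝ} {D : Matrix m m ℝ}
    {K : Matrix l l ℝ} (E : Matrix n l ℝ) (hABCD : IsHurwitz (fromBlocks A B C D))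
    (hK : IsHurwitz K) :
    IsHurwitz (fromBlocks A (fromCols B E) (fromRows C 0) (fromBlocks D 0 0 K)) := by
  have h := (hABCD.fromBlocks_zero₂₁ (fromRows E 0) hK).reindex (Equiv.sumAssoc n m l)
  convert h using 1
  ext (i | i | i) (j | j | j) <;> rfl

end IsHurwitz

theorem Matrix.fromRows_add_fromRows {R m₁ m₂ n : Type*} [Add R] (A₁ B₁ : Matrix m₁ n R)
    (A₂ B₂ : Matrix m₂ n R) :
    fromRows A₁ A₂ + fromRows B₁ B₂ = fromRows (A₁ + B₁) (A₂ + B₂) := by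
  ext (i | i) j <;> rfl

section RetrofitController

variable {R n₁ n₂ nh o : Type*} [Ring R] [DecidableEq n₁] [DecidableEq n₂] [DecidableEq nh]

/-- The change of coordinates `(x₁, x₂, x̂₁) ↦ (x₁, x₂, P x₁ - x̂₁)`. -/
def errorCoordinates (P : Matrix nh n₁ R) : Matrix (n₁ ⊕ (n₂ ⊕ nh)) (n₁ ⊕ (n₂ ⊕ nh)) R :=
  fromBlocks 1 0 (fromRows 0 P) (fromBlocks 1 0 0 (-1))

variable [Fintype n₁] [Fintype n₂] [Fintype nh] [Fintype o]

theorem errorCoordinates_mul_self (P : Matrix nh n₁ R) :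
    errorCoordinates (n₂ := n₂) P * errorCoordinates P = 1 := by
  simp only [errorCoordinates, fromBlocks_multiply, fromBlocks_mul_fromRows,
    Matrix.mul_one, Matrix.one_mul, Matrix.zero_mul, Matrix.mul_zero, add_zero, zero_add,
    Matrix.neg_mul, Matrix.mul_neg, neg_neg, neg_zero, fromRows_add_fromRows, add_neg_cancel,
    fromRows_zero, fromBlocks_one]

theorem errorCoordinates_conj_closedLoop (A₁ : Matrix n₁ n₁ R) (A₁₂ : Matrix n₁ n₂ R)
    (A₂₁ : Matrix n₂ n₁ R) (A₂ : Matrix n₂ n₂ R) (G : Matrix n₁ nh R) (P : Matrix n₁ nh R)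
    (Pd : Matrix nh n₁ R) (Pb : Matrix n₁ o R) (Pbd : Matrix o n₁ R)
    (hproj : P * Pd + Pb * Pbd = 1) (hA₁₂ : Pd * A₁₂ = 0) :
    errorCoordinates Pd *
        fromBlocks (A₁ + G * Pd) (fromCols A₁₂ (-G)) (fromRows A₂₁ (Pd * A₁ * Pb * Pbd))
          (fromBlocks A₂ 0 0 (Pd * A₁ * P)) * errorCoordinates Pd =
      fromBlocks A₁ (fromCols A₁₂ G) (fromRows A₂₁ 0)
        (fromBlocks A₂ 0 0 (Pd * A₁ * P + Pd * G)) := by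
  have hPb : Pb * Pbd = 1 - P * Pd := eq_sub_of_add_eq' hproj
  simp only [errorCoordinates, Matrix.mul_assoc, hPb, hA₁₂, fromBlocks_multiply,
    fromBlocks_mul_fromRows, fromCols_mul_fromRows, fromCols_mul_fromBlocks, fromRows_mul,
    mul_fromCols, Matrix.mul_one, Matrix.one_mul, Matrix.zero_mul, Matrix.mul_zero, add_zero,
    zero_add, Matrix.mul_sub, Matrix.mul_add, Matrix.add_mul, Matrix.neg_mul, Matrix.mul_neg,
    neg_neg, neg_zero, fromCols_fromRows_eq_fromBlocks, fromBlocks_add, fromRows_add_fromRows,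
    fromRows_neg, sub_zero, sub_neg_eq_add]
  rw [fromBlocks_inj]
  refine ⟨by abel, rfl, ?_, ?_⟩ <;> congr 1 <;> abel

end RetrofitController

theorem theorem2_closed_loop_stability_general
    {n₁ n₂ nh₁ m₁ m₂ q : ℕ}
    (A₁ : Matrix (Fin n₁) (Fin n₁) ℝ) (L₁ : Matrix (Fin n₁) (Fin m₂) ℝ)
    (B₁ : Matrix (Fin n₁) (Fin m₁) ℝ) (A₂ : Matrix (Fin n₂) (Fin n₂) ℝ)
    (L₂ : Matrix (Fin n₂) (Fin q) ℝ) (Γ₁ : Matrix (Fin q) (Fin n₁) ℝ)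
    (Γ₂ : Matrix (Fin m₂) (Fin n₂) ℝ)
    (P₁ : Matrix (Fin n₁) (Fin nh₁) ℝ) (P₁d : Matrix (Fin nh₁) (Fin n₁) ℝ)
    (Pb₁ : Matrix (Fin n₁) (Fin (n₁ - nh₁)) ℝ) (Pb₁d : Matrix (Fin (n₁ - nh₁)) (Fin n₁) ℝ)
    (Kh₁ : Matrix (Fin m₁) (Fin nh₁) ℝ)
    (hproj : P₁ * P₁d + Pb₁ * Pb₁d = 1)
    (hL : P₁d * L₁ = 0)
    (hA : IsHurwitz (fromBlocks A₁ (L₁ * Γ₂) (L₂ * Γ₁) A₂))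
    (hK : IsHurwitz (P₁d * A₁ * P₁ + P₁d * B₁ * Kh₁)) :
    IsHurwitz
      (fromBlocks (A₁ + B₁ * Kh₁ * P₁d) (fromCols (L₁ * Γ₂) (-(B₁ * Kh₁)))
        (fromRows (L₂ * Γ₁) (P₁d * A₁ * Pb₁ * Pb₁d))
        (fromBlocks A₂ (0 : Matrix (Fin n₂) (Fin nh₁) ℝ)
          (0 : Matrix (Fin nh₁) (Fin n₂) ℝ) (P₁d * A₁ * P₁))) := by
  have hLΓ : P₁d * (L₁ * Γ₂) = 0 := by rw [← Matrix.mul_assoc, hL, Matrix.zero_mul]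
  have hTriangular := hA.fromBlocks_fromBlocks_zero (B₁ * Kh₁) hK
  rw [Matrix.mul_assoc P₁d B₁ Kh₁, ← errorCoordinates_conj_closedLoop A₁ (L₁ * Γ₂) (L₂ * Γ₁)
    A₂ (B₁ * Kh₁) P₁ P₁d Pb₁ Pb₁d hproj hLΓ] at hTriangular
  exact (IsHurwitz.conj_iff (errorCoordinates_mul_self P₁d)).mp hTriangular

/-- **Stability part of Theorem 2.** The closed-loop matrix of the preexisting system with
the retrofit controller `Π₁'` (state ordering `(x₁, x₂, x̂₁)`) is Hurwitz. -/
theorem theorem2_closed_loop_stability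
    {n₁ n₂ nh₁ m₁ m₂ q : ℕ}
    (A₁ : Matrix (Fin n₁) (Fin n₁) ℝ) (L₁ : Matrix (Fin n₁) (Fin m₂) ℝ)
    (B₁ : Matrix (Fin n₁) (Fin m₁) ℝ) (A₂ : Matrix (Fin n₂) (Fin n₂) ℝ)
    (L₂ : Matrix (Fin n₂) (Fin q) ℝ) (Γ₁ : Matrix (Fin q) (Fin n₁) ℝ)
    (Γ₂ : Matrix (Fin m₂) (Fin n₂) ℝ)
    (P₁ : Matrix (Fin n₁) (Fin nh₁) ℝ) (P₁d : Matrix (Fin nh₁) (Fin n₁) ℝ)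
    (Pb₁ : Matrix (Fin n₁) (Fin (n₁ - nh₁)) ℝ) (Pb₁d : Matrix (Fin (n₁ - nh₁)) (Fin n₁) ℝ)
    (Kh₁ : Matrix (Fin m₁) (Fin nh₁) ℝ)
    (hleft : P₁d * P₁ = 1)
    (hproj : P₁ * P₁d + Pb₁ * Pb₁d = 1)
    (hB : P₁ * P₁d * B₁ = B₁)
    (hL : P₁d * L₁ = 0)
    (hA : IsHurwitz (fromBlocks A₁ (L₁ * Γ₂) (L₂ * Γ₁) A₂))
    (hK : IsHurwitz (P₁d * A₁ * P₁ + P₁d * B₁ * Kh₁)) :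
    IsHurwitz
      (fromBlocks (A₁ + B₁ * Kh₁ * P₁d) (fromCols (L₁ * Γ₂) (-(B₁ * Kh₁)))
        (fromRows (L₂ * Γ₁) (P₁d * A₁ * Pb₁ * Pb₁d))
        (fromBlocks A₂ (0 : Matrix (Fin n₂) (Fin nh₁) ℝ)
          (0 : Matrix (Fin nh₁) (Fin n₂) ℝ) (P₁d * A₁ * P₁))) :=
  theorem2_closed_loop_stability_general A₁ L₁ B₁ A₂ L₂ Γ₁ Γ₂ P₁ P₁d Pb₁ Pb₁d Kh₁ hproj hL hA hK
end

section
/- Coordinate transformation identity underlying Theorem 2 (equation (ctrans2)). Let P₁ (n₁×n̂₁), P₁† (n̂₁×n₁), P̄₁, P̄₁† be real matrices with P₁†P₁ = I, P₁P₁† + P̄₁P̄₁† = I, P₁P₁†B₁ = B₁, and P₁†L₁ = 0, and let K̂₁ be a real m₁×n̂₁ matrix. Define the block matrices (with state ordering (x₁, x₂, x̂₁)) T' = [[P̄₁P̄₁†, 0, P₁],[0, I, 0],[P₁†, 0, −I]] and S = [[I, 0, P₁],[0, I, 0],[P₁†, 0, 0]], the closed-loop matrix M_cl' = [[A₁ +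 B₁K̂₁P₁†, L₁Γ₂, −B₁K̂₁],[L₂Γ₁, A₂, 0],[P₁†A₁P̄₁P̄₁†, 0, P₁†A₁P₁]], and the cascade matrix (with state ordering (ξ₁, ξ₂, ξ̂₁)) M_cas' = [[A₁, L₁Γ₂, P̄₁P̄₁†A₁P₁],[L₂Γ₁, A₂, L₂Γ₁P₁],[0, 0, P₁†A₁P₁ + P₁†B₁K̂₁]]. Then T'·S = I and S·T' = I (so T' is invertible with inverse S), and T' · M_cl' · S = M_cas'. -/
/-!
Write `Q = P̄₁P̄₁† = 1 - P₁P₁†`. From `P₁†P₁ = 1` one gets `QP₁ = 0` and `P₁†Q = 0`, which make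
`T'S = ST' = 1` a blockwise computation. The same computation, using `QB₁ = 0` and
`P₁†L₁ = 0`, gives the intertwining relation `T'M_cl' = M_cas'T'`; multiplying on the right by
`S = T'⁻¹` yields `T'M_cl'S = M_cas'`.
-/

open Matrix

namespace Matrix

variable {R : Type*} {l m n l' m' n' l'' m'' n'' : Type*}

def fromBlocks₃ (a₁₁ : Matrix l l' R) (a₁₂ : Matrix l m' R) (a₁₃ : Matrix l n' R)
    (a₂₁ : Matrix m l' R) (a₂₂ : Matrix m m' R) (a₂₃ : Matrix m n' R)
    (a₃₁ : Matrix n l' R) (a₃₂ : Matrix n m' R) (a₃₃ : Matrix n n' R) :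
    Matrix (l ⊕ m ⊕ n) (l' ⊕ m' ⊕ n') R :=
  fromBlocks a₁₁ (fromCols a₁₂ a₁₃) (fromRows a₂₁ a₃₁) (fromBlocks a₂₂ a₂₃ a₃₂ a₃₃)

theorem fromBlocks₃_mul [NonUnitalNonAssocSemiring R] [Fintype l'] [Fintype m'] [Fintype n']
    (a₁₁ : Matrix l l' R) (a₁₂ : Matrix l m' R) (a₁₃ : Matrix l n' R)
    (a₂₁ : Matrix m l' R) (a₂₂ : Matrix m m' R) (a₂₃ : Matrix m n' R)
    (a₃₁ : Matrix n l' R) (a₃₂ : Matrix n m' R) (a₃₃ : Matrix n n' R)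
    (b₁₁ : Matrix l' l'' R) (b₁₂ : Matrix l' m'' R) (b₁₃ : Matrix l' n'' R)
    (b₂₁ : Matrix m' l'' R) (b₂₂ : Matrix m' m'' R) (b₂₃ : Matrix m' n'' R)
    (b₃₁ : Matrix n' l'' R) (b₃₂ : Matrix n' m'' R) (b₃₃ : Matrix n' n'' R) :
    fromBlocks₃ a₁₁ a₁₂ a₁₃ a₂₁ a₂₂ a₂₃ a₃₁ a₃₂ a₃₃ *
        fromBlocks₃ b₁₁ b₁₂ b₁₃ b₂₁ b₂₂ b₂₃ b₃₁ b₃₂ b₃₃ =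
      fromBlocks₃
        (a₁₁ * b₁₁ + a₁₂ * b₂₁ + a₁₃ * b₃₁) (a₁₁ * b₁₂ + a₁₂ * b₂₂ + a₁₃ * b₃₂)
        (a₁₁ * b₁₃ + a₁₂ * b₂₃ + a₁₃ * b₃₃)
        (a₂₁ * b₁₁ + a₂₂ * b₂₁ + a₂₃ * b₃₁) (a₂₁ * b₁₂ + a₂₂ * b₂₂ + a₂₃ * b₃₂)
        (a₂₁ * b₁₃ + a₂₂ * b₂₃ + a₂₃ * b₃₃)
        (a₃₁ * b₁₁ + a₃₂ * b₂₁ + a₃₃ * b₃₁) (a₃₁ * b₁₂ + a₃₂ * b₂₂ + a₃₃ * b₃₂)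
        (a₃₁ * b₁₃ + a₃₂ * b₂₃ + a₃₃ * b₃₃) := by
  ext (i | i | i) (j | j | j) <;>
    simp [fromBlocks₃, mul_apply, Fintype.sum_sum_type, add_assoc]

theorem fromBlocks₃_one [Zero R] [One R] [DecidableEq l] [DecidableEq m] [DecidableEq n] :
    fromBlocks₃ (1 : Matrix l l R) 0 0 0 (1 : Matrix m m R) 0 0 0 (1 : Matrix n n R) = 1 := by
  ext (i | i | i) (j | j | j) <;> simp [fromBlocks₃, one_apply]

end Matrix

section CascadeCoordChange

variable {R : Type*} [Ring R] {l m n : Type*} [Fintype l] [Fintype m] [Fintype n]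
  [DecidableEq l] [DecidableEq m] [DecidableEq n]

def cascadeCoordChange (P : Matrix l n R) (Pd : Matrix n l R) :
    Matrix (l ⊕ m ⊕ n) (l ⊕ m ⊕ n) R :=
  fromBlocks₃ (1 - P * Pd) 0 P 0 1 0 Pd 0 (-1)

def cascadeCoordChangeInv (P : Matrix l n R) (Pd : Matrix n l R) :
    Matrix (l ⊕ m ⊕ n) (l ⊕ m ⊕ n) R :=
  fromBlocks₃ 1 0 P 0 1 0 Pd 0 0

variable {P : Matrix l n R} {Pd : Matrix n l R}

theorem one_sub_mul_mul_eq_zero_of_mul_eq_one (h : Pd * P = 1) : (1 - P * Pd) * P = 0 := by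
  rw [Matrix.sub_mul, Matrix.mul_assoc, h, Matrix.one_mul, Matrix.mul_one, sub_self]

theorem mul_one_sub_mul_eq_zero_of_mul_eq_one (h : Pd * P = 1) : Pd * (1 - P * Pd) = 0 := by
  rw [Matrix.mul_sub, ← Matrix.mul_assoc, h, Matrix.one_mul, Matrix.mul_one, sub_self]

theorem cascadeCoordChange_mul_inv (h : Pd * P = 1) :
    cascadeCoordChange (m := m) P Pd * cascadeCoordChangeInv P Pd = 1 := by
  rw [cascadeCoordChange, cascadeCoordChangeInv, fromBlocks₃_mul, ← fromBlocks₃_one]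
  congr 1 <;> simp [one_sub_mul_mul_eq_zero_of_mul_eq_one h, h]

theorem cascadeCoordChangeInv_mul (h : Pd * P = 1) :
    cascadeCoordChangeInv (m := m) P Pd * cascadeCoordChange P Pd = 1 := by
  rw [cascadeCoordChange, cascadeCoordChangeInv, fromBlocks₃_mul, ← fromBlocks₃_one]
  congr 1 <;> simp [mul_one_sub_mul_eq_zero_of_mul_eq_one h, h]

theorem semiconjBy_cascadeCoordChange {u : Type*} [Fintype u]
    (A₁ : Matrix l l R) (B₁ : Matrix l u R) (K : Matrix u n R) (A₂ : Matrix m m R)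
    (C₁₂ : Matrix l m R) (C₂₁ : Matrix m l R)
    (hB : P * Pd * B₁ = B₁) (hC : Pd * C₁₂ = 0) :
    SemiconjBy (cascadeCoordChange P Pd)
      (fromBlocks₃ (A₁ + B₁ * K * Pd) C₁₂ (-(B₁ * K)) C₂₁ A₂ 0
        (Pd * A₁ * (1 - P * Pd)) 0 (Pd * A₁ * P))
      (fromBlocks₃ A₁ C₁₂ ((1 - P * Pd) * A₁ * P) C₂₁ A₂ (C₂₁ * P)
        0 0 (Pd * A₁ * P + Pd * B₁ * K)) := by
  have hPC : P * Pd * C₁₂ = 0 := by rw [Matrix.mul_assoc, hC, Matrix.mul_zero]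
  rw [SemiconjBy, cascadeCoordChange, fromBlocks₃_mul, fromBlocks₃_mul]
  congr 1 <;>
    simp [Matrix.mul_sub, Matrix.sub_mul, Matrix.mul_add, Matrix.add_mul, ← Matrix.mul_assoc,
      hB, hC, hPC]
  all_goals abel

/-- **Coordinate transformation identity underlying Theorem 2 (equation (ctrans2)).** -/
theorem theorem2_similarity_identity
    {n₁ n₂ nh₁ m₁ m₂ q : ℕ}
    (A₁ : Matrix (Fin n₁) (Fin n₁) ℝ) (L₁ : Matrix (Fin n₁) (Fin m₂) ℝ)
    (B₁ : Matrix (Fin n₁) (Fin m₁) ℝ) (A₂ : Matrix (Fin n₂) (Fin n₂) ℝ)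
    (L₂ : Matrix (Fin n₂) (Fin q) ℝ) (Γ₁ : Matrix (Fin q) (Fin n₁) ℝ)
    (Γ₂ : Matrix (Fin m₂) (Fin n₂) ℝ)
    (P₁ : Matrix (Fin n₁) (Fin nh₁) ℝ) (P₁d : Matrix (Fin nh₁) (Fin n₁) ℝ)
    (Pb₁ : Matrix (Fin n₁) (Fin (n₁ - nh₁)) ℝ) (Pb₁d : Matrix (Fin (n₁ - nh₁)) (Fin n₁) ℝ)
    (Kh₁ : Matrix (Fin m₁) (Fin nh₁) ℝ)
    (hleft : P₁d * P₁ = 1)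
    (hproj : P₁ * P₁d + Pb₁ * Pb₁d = 1)
    (hB : P₁ * P₁d * B₁ = B₁)
    (hL : P₁d * L₁ = 0) :
    let T : Matrix (Fin n₁ ⊕ (Fin n₂ ⊕ Fin nh₁)) (Fin n₁ ⊕ (Fin n₂ ⊕ Fin nh₁)) ℝ :=
      fromBlocks (Pb₁ * Pb₁d)
        (fromCols (0 : Matrix (Fin n₁) (Fin n₂) ℝ) P₁)
        (fromRows (0 : Matrix (Fin n₂) (Fin n₁) ℝ) P₁d)
        (fromBlocks (1 : Matrix (Fin n₂) (Fin n₂) ℝ) (0 : Matrix (Fin n₂) (Fin nh₁) ℝ)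
          (0 : Matrix (Fin nh₁) (Fin n₂) ℝ) (-(1 : Matrix (Fin nh₁) (Fin nh₁) ℝ)));
    let S : Matrix (Fin n₁ ⊕ (Fin n₂ ⊕ Fin nh₁)) (Fin n₁ ⊕ (Fin n₂ ⊕ Fin nh₁)) ℝ :=
      fromBlocks (1 : Matrix (Fin n₁) (Fin n₁) ℝ)
        (fromCols (0 : Matrix (Fin n₁) (Fin n₂) ℝ) P₁)
        (fromRows (0 : Matrix (Fin n₂) (Fin n₁) ℝ) P₁d)
        (fromBlocks (1 : Matrix (Fin n₂) (Fin n₂) ℝ) (0 : Matrix (Fin n₂) (Fin nh₁) ℝ)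
          (0 : Matrix (Fin nh₁) (Fin n₂) ℝ) (0 : Matrix (Fin nh₁) (Fin nh₁) ℝ));
    let Mcl : Matrix (Fin n₁ ⊕ (Fin n₂ ⊕ Fin nh₁)) (Fin n₁ ⊕ (Fin n₂ ⊕ Fin nh₁)) ℝ :=
      fromBlocks (A₁ + B₁ * Kh₁ * P₁d) (fromCols (L₁ * Γ₂) (-(B₁ * Kh₁)))
        (fromRows (L₂ * Γ₁) (P₁d * A₁ * Pb₁ * Pb₁d))
        (fromBlocks A₂ (0 : Matrix (Fin n₂) (Fin nh₁) ℝ)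
          (0 : Matrix (Fin nh₁) (Fin n₂) ℝ) (P₁d * A₁ * P₁));
    let Mcas : Matrix (Fin n₁ ⊕ (Fin n₂ ⊕ Fin nh₁)) (Fin n₁ ⊕ (Fin n₂ ⊕ Fin nh₁)) ℝ :=
      fromBlocks A₁ (fromCols (L₁ * Γ₂) (Pb₁ * Pb₁d * A₁ * P₁))
        (fromRows (L₂ * Γ₁) (0 : Matrix (Fin nh₁) (Fin n₁) ℝ))
        (fromBlocks A₂ (L₂ * Γ₁ * P₁) (0 : Matrix (Fin nh₁) (Fin n₂) ℝ)
          (P₁d * A₁ * P₁ + P₁d * B₁ * Kh₁));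
    T * S = 1 ∧ S * T = 1 ∧ T * Mcl * S = Mcas := by
  intro T S Mcl Mcas
  have hQ : Pb₁ * Pb₁d = 1 - P₁ * P₁d := eq_sub_of_add_eq' hproj
  have hT : T = cascadeCoordChange P₁ P₁d := by
    simp only [T, cascadeCoordChange, fromBlocks₃, hQ]
  have hMcl : Mcl = fromBlocks₃ (A₁ + B₁ * Kh₁ * P₁d) (L₁ * Γ₂) (-(B₁ * Kh₁)) (L₂ * Γ₁) A₂ 0
      (P₁d * A₁ * (1 - P₁ * P₁d)) 0 (P₁d * A₁ * P₁) := by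
    simp only [Mcl, fromBlocks₃, Matrix.mul_assoc (P₁d * A₁) Pb₁, hQ]
  have hMcas : Mcas = fromBlocks₃ A₁ (L₁ * Γ₂) ((1 - P₁ * P₁d) * A₁ * P₁) (L₂ * Γ₁) A₂
      (L₂ * Γ₁ * P₁) 0 0 (P₁d * A₁ * P₁ + P₁d * B₁ * Kh₁) := by
    simp only [Mcas, fromBlocks₃, hQ]
  have hS : S = cascadeCoordChangeInv P₁ P₁d := rfl
  have hTS : T * S = 1 := hT ▸ hS ▸ cascadeCoordChange_mul_inv hleft
  have hLΓ : P₁d * (L₁ * Γ₂) = 0 := by rw [← Matrix.mul_assoc, hL, Matrix.zero_mul]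
  have hconj : SemiconjBy T Mcl Mcas := by
    rw [hT, hMcl, hMcas]
    exact semiconjBy_cascadeCoordChange A₁ B₁ Kh₁ A₂ (L₁ * Γ₂) (L₂ * Γ₁) hB hLΓ
  refine ⟨hTS, hT ▸ hS ▸ cascadeCoordChangeInv_mul hleft, ?_⟩
  rw [hconj.eq, Matrix.mul_assoc, hTS, Matrix.mul_one]
end CascadeCoordChange
end

section
/- Zero control action of the retrofit controller under zero local initial conditions (Section 3.3.2). Let K₁ be a real m₁×p₁ matrix and let (x₁, x₂, x̂₁) : ℝ → ℝ^{n₁} × ℝ^{n₂} × ℝ^{n₁} be differentiable functions solving the closed-loop system x₁' = A₁x₁ + L₁Γ₂x₂ + B₁K₁(C₁x₁ − C₁x̂₁), x₂' = L₂Γ₁x₁ + A₂x₂, x̂₁' = A₁x̂₁ + L₁Γ₂x₂ with x₁(0) = 0 and x̂₁(0) = 0, and with arbitrary x₂(0). Then x̂₁(t) = x₁(t) for all t ≥ 0, and consequently the control input u₁(t) = K₁(C₁x₁(t) − C₁x̂₁(t)) is identically zero for all t ≥ 0. -/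
open Matrix

/-! The estimation error `e = x₁ - x̂₁` of the retrofit controller obeys the autonomous linear
ODE `e' = (A₁ + B₁K₁C₁) e`: the interconnection term `L₁Γ₂x₂` enters `x₁` and `x̂₁` alike and
cancels. With `e(0) = 0`, uniqueness of solutions of a linear ODE forces `e ≡ 0`, hence
`x̂₁ = x₁` and `u₁ = K₁C₁e = 0`. -/

theorem ContinuousLinearMap.eq_zero_of_hasDerivAt_apply {E : Type*} [NormedAddCommGroup E]
    [NormedSpace ℝ E] (F : E →L[ℝ] E) {e : ℝ → E} (he : ∀ t, HasDerivAt e (F (e t)) t)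
    {t₀ : ℝ} (h₀ : e t₀ = 0) : e = 0 :=
  ODE_solution_unique_univ (v := fun _ => F) (s := fun _ => Set.univ) (t₀ := t₀)
    (fun _ => F.lipschitz.lipschitzOnWith) (fun t => ⟨he t, trivial⟩)
    (fun t => ⟨by simp, trivial⟩) h₀

theorem Matrix.eq_zero_of_hasDerivAt_mulVec {n : Type*} [Fintype n]
    (M : Matrix n n ℝ) {e : ℝ → n → ℝ} (he : ∀ t, HasDerivAt e (M *ᵥ e t) t)
    {t₀ : ℝ} (h₀ : e t₀ = 0) : e = 0 :=
  (LinearMap.toContinuousLinearMap M.mulVecLin).eq_zero_of_hasDerivAt_apply he h₀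

theorem hasDerivAt_retrofit_error {n₁ m₁ p₁ : Type*} [Fintype n₁] [Fintype m₁] [Fintype p₁]
    (A₁ : Matrix n₁ n₁ ℝ) (B₁ : Matrix n₁ m₁ ℝ) (C₁ : Matrix p₁ n₁ ℝ) (K₁ : Matrix m₁ p₁ ℝ)
    {x₁ xh₁ : ℝ → n₁ → ℝ} {w : n₁ → ℝ} {t : ℝ}
    (hx₁ : HasDerivAt x₁ (A₁ *ᵥ x₁ t + w + (B₁ * K₁) *ᵥ (C₁ *ᵥ x₁ t - C₁ *ᵥ xh₁ t)) t)
    (hxh₁ : HasDerivAt xh₁ (A₁ *ᵥ xh₁ t + w) t) :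
    HasDerivAt (x₁ - xh₁) ((A₁ + B₁ * K₁ * C₁) *ᵥ (x₁ t - xh₁ t)) t := by
  refine (hx₁.sub hxh₁).congr_deriv ?_
  simp only [add_mulVec, mulVec_sub, ← mulVec_mulVec, Matrix.mul_assoc]
  abel

theorem retrofit_zero_control_action_general
    {n₁ n₂ m₁ m₂ p₁ : ℕ}
    (A₁ : Matrix (Fin n₁) (Fin n₁) ℝ) (L₁ : Matrix (Fin n₁) (Fin m₂) ℝ)
    (B₁ : Matrix (Fin n₁) (Fin m₁) ℝ) (C₁ : Matrix (Fin p₁) (Fin n₁) ℝ)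
    (Γ₂ : Matrix (Fin m₂) (Fin n₂) ℝ)
    (K₁ : Matrix (Fin m₁) (Fin p₁) ℝ)
    (x₁ xh₁ : ℝ → Fin n₁ → ℝ) (x₂ : ℝ → Fin n₂ → ℝ)
    (hx₁ : ∀ t : ℝ, HasDerivAt x₁
      (A₁.mulVec (x₁ t) + (L₁ * Γ₂).mulVec (x₂ t)
        + (B₁ * K₁).mulVec (C₁.mulVec (x₁ t) - C₁.mulVec (xh₁ t))) t)
    (hxh₁ : ∀ t : ℝ, HasDerivAt xh₁
      (A₁.mulVec (xh₁ t) + (L₁ * Γ₂).mulVec (x₂ t)) t)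
    (hx₁0 : x₁ 0 = 0) (hxh₁0 : xh₁ 0 = 0) :
    ∀ t : ℝ, 0 ≤ t →
      xh₁ t = x₁ t ∧ K₁.mulVec (C₁.mulVec (x₁ t) - C₁.mulVec (xh₁ t)) = 0 := by
  have error_eq_zero : x₁ - xh₁ = 0 :=
    (A₁ + B₁ * K₁ * C₁).eq_zero_of_hasDerivAt_mulVec
      (fun t => hasDerivAt_retrofit_error A₁ B₁ C₁ K₁ (hx₁ t) (hxh₁ t))
      (t₀ := 0) (by simp [hx₁0, hxh₁0])
  intro t _
  have hxt : x₁ t = xh₁ t := sub_eq_zero.mp (congrFun error_eq_zero t)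
  exact ⟨hxt.symm, by simp [hxt]⟩

/-- **Zero control action of the retrofit controller under zero local initial conditions
(Section 3.3.2).** If `x₁(0) = 0` and `x̂₁(0) = 0` then `x̂₁ ≡ x₁` on `[0, ∞)` and the
retrofit control input `u₁ = K₁(C₁x₁ − C₁x̂₁)` is identically zero there. -/
theorem retrofit_zero_control_action
    {n₁ n₂ m₁ m₂ q p₁ : ℕ}
    (A₁ : Matrix (Fin n₁) (Fin n₁) ℝ) (L₁ : Matrix (Fin n₁) (Fin m₂) ℝ)
    (B₁ : Matrix (Fin n₁) (Fin m₁) ℝ) (C₁ : Matrix (Fin p₁) (Fin n₁) ℝ)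
    (A₂ : Matrix (Fin n₂) (Fin n₂) ℝ) (L₂ : Matrix (Fin n₂) (Fin q) ℝ)
    (Γ₁ : Matrix (Fin q) (Fin n₁) ℝ) (Γ₂ : Matrix (Fin m₂) (Fin n₂) ℝ)
    (K₁ : Matrix (Fin m₁) (Fin p₁) ℝ)
    (x₁ xh₁ : ℝ → Fin n₁ → ℝ) (x₂ : ℝ → Fin n₂ → ℝ)
    (hx₁ : ∀ t : ℝ, HasDerivAt x₁
      (A₁.mulVec (x₁ t) + (L₁ * Γ₂).mulVec (x₂ t)
        + (B₁ * K₁).mulVec (C₁.mulVec (x₁ t) - C₁.mulVec (xh₁ t))) t)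
    (hx₂ : ∀ t : ℝ, HasDerivAt x₂
      ((L₂ * Γ₁).mulVec (x₁ t) + A₂.mulVec (x₂ t)) t)
    (hxh₁ : ∀ t : ℝ, HasDerivAt xh₁
      (A₁.mulVec (xh₁ t) + (L₁ * Γ₂).mulVec (x₂ t)) t)
    (hx₁0 : x₁ 0 = 0) (hxh₁0 : xh₁ 0 = 0) :
    ∀ t : ℝ, 0 ≤ t →
      xh₁ t = x₁ t ∧ K₁.mulVec (C₁.mulVec (x₁ t) - C₁.mulVec (xh₁ t)) = 0 :=
  retrofit_zero_control_action_general A₁ L₁ B₁ C₁ Γ₂ K₁ x₁ xh₁ x₂ hx₁ hxh₁ hx₁0 hxh₁0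
end
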